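/- The number of labeled trees on p ≥ 2 vertices is p^{p-2}. -/

import Mathlib

/-!
Prüfer's bijection. A code `a :: s` is decoded by attaching the least vertex `l` absent from
`a :: s` as a leaf to `a`, and decoding `s` recursively on the remaining vertices. By induction on
the number of vertices, the decoded graph is a tree whose leaves are exactly the vertices absent
from the code. Hence the least leaf of a decoded tree and its neighbour give back `l` and `a`,
which makes decoding injective; and deleting the least leaf of an arbitrary tree and decoding a
code of the rest shows that it is surjective. So the trees on `n + 2` vertices correspond to the
`(n + 2) ^ n` codes of length `n`.
-/

lemma Set.Finite.exists_isLeast {V : Type*} [LinearOrder V] {S : Set V} (hS : S.Finite)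
    (hne : S.Nonempty) : ∃ l, IsLeast S l :=
  ⟨_, by simpa using hS.toFinset.isLeast_min' (by simpa using hne)⟩

lemma Nat.card_compl_singleton {V : Type*} [Finite V] (l : V) :
    Nat.card ({l}ᶜ : Set V) = Nat.card V - 1 := by
  rw [Nat.card_coe_set_eq, Set.ncard_compl, Set.ncard_singleton]

namespace List

lemma exists_isLeast_notMem {V : Type*} [Finite V] [LinearOrder V] {s : List V}
    (h : s.length < Nat.card V) : ∃ l, IsLeast {x | x ∉ s} l :=
  (Set.toFinite _).exists_isLeast
    (Cardinal.exists_notMem_of_length_lt s (by rw [← Nat.cast_card]; exact_mod_cast h))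

variable {V : Type*} [DecidableEq V] {l : V}

def restrictCompl (l : V) (s : List V) : List ({l}ᶜ : Set V) :=
  s.filterMap fun x => if h : x = l then none else some ⟨x, h⟩

lemma length_restrictCompl_le (s : List V) : (s.restrictCompl l).length ≤ s.length :=
  length_filterMap_le _ _

@[simp] lemma mem_restrictCompl {s : List V} {x : ({l}ᶜ : Set V)} :
    x ∈ s.restrictCompl l ↔ (x : V) ∈ s := by
  simp only [restrictCompl, mem_filterMap, Option.dite_none_left_eq_some, Option.some.injEq]
  exact ⟨fun ⟨y, hy, _, hyx⟩ => hyx ▸ hy, fun hx => ⟨x, hx, x.2, rfl⟩⟩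

lemma map_val_restrictCompl {s : List V} (h : l ∉ s) :
    (s.restrictCompl l).map Subtype.val = s := by
  induction s with
  | nil => rfl
  | cons x s ih => simp_all [restrictCompl, Ne.symm]

lemma length_restrictCompl {s : List V} (h : l ∉ s) :
    (s.restrictCompl l).length = s.length := by
  rw [← length_map Subtype.val, map_val_restrictCompl h]

@[simp] lemma restrictCompl_map_val (s : List ({l}ᶜ : Set V)) :
    (s.map Subtype.val).restrictCompl l = s := by
  induction s with
  | nil => rfl
  | cons x s ih =>
    have hx : (x : V) ≠ l := x.2
    simp_all [restrictCompl]

end List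

namespace SimpleGraph

universe u

variable {V : Type u}

lemma IsAcyclic.spanningCoe {s : Set V} {G : SimpleGraph s} (hG : G.IsAcyclic) :
    G.spanningCoe.IsAcyclic := by
  intro v c hc
  have hs : ∀ x ∈ c.support, x ∈ s := fun x hx => by
    obtain ⟨y, -, rfl⟩ := (support_spanningCoe G).le
      (mem_support_of_mem_walk_support c hc.not_nil hx)
    exact y.2
  have hG' : (G.spanningCoe.induce s).IsAcyclic := by rwa [induce_spanningCoe]
  rw [← Walk.map_induce c hs] at hc
  exact hG' _ ((Walk.isCycle_map_iff_of_injective Subtype.val_injective).mp hc)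

def IsLeaf (G : SimpleGraph V) (v : V) : Prop := ∃! w, G.Adj v w

lemma isLeaf_induce_iff {G : SimpleGraph V} {s : Set V} {x : s} (h : ∀ w, G.Adj x w → w ∈ s) :
    (G.induce s).IsLeaf x ↔ G.IsLeaf x := by
  constructor
  · rintro ⟨w, hw, hu⟩
    exact ⟨w, hw, fun u hu' => congrArg Subtype.val (hu ⟨u, h u hu'⟩ hu')⟩
  · rintro ⟨w, hw, hu⟩
    exact ⟨⟨w, h w hw⟩, hw, fun u hu' => Subtype.ext (hu u hu')⟩

lemma IsTree.exists_isLeaf [Finite V] [Nontrivial V] {T : SimpleGraph V} (hT : T.IsTree) :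
    ∃ v, T.IsLeaf v := by
  have := Fintype.ofFinite V
  classical
  obtain ⟨v, hv⟩ := hT.exists_vert_degree_one_of_nontrivial
  exact ⟨v, degree_eq_one_iff_existsUnique_adj.mp hv⟩

lemma IsTree.induce_compl_isLeaf {T : SimpleGraph V} (hT : T.IsTree) {l : V}
    (hl : T.IsLeaf l) :
    (T.induce {l}ᶜ).IsTree := by
  obtain ⟨a, hla, ha⟩ := hl
  have : Fintype (T.neighborSet l) :=
    Fintype.ofFinset {a} fun w => by simpa using ⟨fun h => h ▸ hla, ha w⟩
  exact ⟨hT.connected.induce_compl_singleton_of_degree_eq_one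
    (degree_eq_one_iff_existsUnique_adj.mpr ⟨a, hla, ha⟩), hT.isAcyclic.induce _⟩

section AddLeaf

variable {l a : V}

def addLeaf (l a : V) (G : SimpleGraph ({l}ᶜ : Set V)) : SimpleGraph V :=
  G.spanningCoe ⊔ edge l a

variable {G : SimpleGraph ({l}ᶜ : Set V)}

lemma addLeaf_adj_left (ha : a ≠ l) {w : V} : (addLeaf l a G).Adj l w ↔ w = a := by
  have : ¬ G.spanningCoe.Adj l w := fun ⟨_, x, _, _, hx, _⟩ => x.2 hx
  simp only [addLeaf, sup_adj, this, edge_adj, false_or]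
  grind

@[simp] lemma induce_addLeaf : (addLeaf l a G).induce {l}ᶜ = G := by
  ext x y
  have hx : (x : V) ≠ l := x.2
  have hy : (y : V) ≠ l := y.2
  simp [addLeaf, edge_adj, hx, hy]

lemma isLeaf_addLeaf_left (ha : a ≠ l) : (addLeaf l a G).IsLeaf l :=
  ⟨a, (addLeaf_adj_left ha).mpr rfl, fun _ => (addLeaf_adj_left ha).mp⟩

lemma isLeaf_addLeaf_iff (ha : a ≠ l) {x : ({l}ᶜ : Set V)} (hx : (x : V) ≠ a) :
    (addLeaf l a G).IsLeaf x ↔ G.IsLeaf x := by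
  conv_rhs => rw [← induce_addLeaf (a := a) (G := G)]
  refine (isLeaf_induce_iff fun w hw => ?_).symm
  rintro rfl
  exact hx ((addLeaf_adj_left ha).mp hw.symm)

lemma not_isLeaf_addLeaf_right (ha : a ≠ l) {w} (hw : G.Adj ⟨a, ha⟩ w) :
    ¬ (addLeaf l a G).IsLeaf a := by
  rintro ⟨u, -, hu⟩
  have hl : (addLeaf l a G).Adj a l := ((addLeaf_adj_left ha).mpr rfl).symm
  rw [← induce_addLeaf (a := a) (G := G)] at hw
  exact w.2 ((hu w hw).trans (hu l hl).symm)

lemma addLeaf_inj {b : V} {H : SimpleGraph ({l}ᶜ : Set V)} (ha : a ≠ l) (hb : b ≠ l) :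
    addLeaf l a G = addLeaf l b H ↔ a = b ∧ G = H := by
  refine ⟨fun h => ⟨?_, ?_⟩, fun ⟨hab, hGH⟩ => hab ▸ hGH ▸ rfl⟩
  · have := (addLeaf_adj_left (G := G) ha (w := a)).mpr rfl
    rwa [h, addLeaf_adj_left hb] at this
  · rw [← induce_addLeaf (G := G) (a := a), h, induce_addLeaf]

lemma addLeaf_induce_eq {T : SimpleGraph V} (ha : ∀ w, T.Adj l w ↔ w = a) :
    addLeaf l a (T.induce {l}ᶜ) = T := by
  have hal : a ≠ l := fun h => T.irrefl ((ha l).mpr h.symm)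
  ext x y
  by_cases hx : x = l
  · subst hx
    rw [addLeaf_adj_left hal, ha]
  by_cases hy : y = l
  · subst hy
    rw [adj_comm, addLeaf_adj_left hal, adj_comm, ha]
  simp [addLeaf, edge_adj, hx, hy]

lemma isTree_addLeaf (ha : a ≠ l) (hG : G.IsTree) : (addLeaf l a G).IsTree := by
  have hreach : ∀ x : ({l}ᶜ : Set V), (addLeaf l a G).Reachable x a := fun x =>
    ((hG.connected x ⟨a, ha⟩).map (Embedding.map (.subtype _) G).toHom).mono le_sup_left
  have hconn : (addLeaf l a G).Connected := by
    refine (connected_iff_exists_forall_reachable _).mpr ⟨a, fun w => ?_⟩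
    by_cases hw : w = l
    · exact hw ▸ (Adj.reachable ((addLeaf_adj_left ha).mpr rfl)).symm
    · exact (hreach ⟨w, hw⟩).symm
  have hl : ¬ G.spanningCoe.Reachable l a := fun h => by
    obtain ⟨x, -, hx⟩ := (support_spanningCoe G).le (mem_support_of_reachable ha.symm h)
    exact x.2 hx
  exact ⟨hconn, hG.isAcyclic.spanningCoe.sup_edge_of_not_reachable hl⟩

end AddLeaf

lemma isTree_top_of_card_eq_two (h : Nat.card V = 2) : (⊤ : SimpleGraph V).IsTree := by
  have : Finite V := Nat.finite_of_card_ne_zero (by omega)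
  have : Nonempty V := (Nat.card_pos_iff.mp (by omega)).1
  exact ⟨connected_top, .of_card_le_two (by simp [ENat.card_eq_coe_natCard, h])⟩

lemma isLeaf_top_of_card_eq_two (h : Nat.card V = 2) (v : V) :
    (⊤ : SimpleGraph V).IsLeaf v := by
  simpa [IsLeaf, eq_comm] using (Nat.card_eq_two_iff' v).mp h

lemma Connected.eq_top_of_card_eq_two {G : SimpleGraph V} (hG : G.Connected)
    (h : Nat.card V = 2) : G = ⊤ := by
  ext x y
  refine ⟨Adj.ne, fun hxy => ?_⟩
  have : Nontrivial V := ⟨x, y, hxy⟩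
  obtain ⟨u, hu⟩ := hG.preconnected.exists_adj_of_nontrivial x
  obtain ⟨z, -, hz⟩ := (Nat.card_eq_two_iff' x).mp h
  rwa [(hz y (Ne.symm hxy)).trans (hz u hu.ne').symm]

section Prufer

variable [Fintype V] [LinearOrder V]

noncomputable def fromPruferCode :
    {V : Type u} → [Fintype V] → [LinearOrder V] → List V → SimpleGraph V
  | _, _, _, [] => ⊤
  | V, _, _, a :: s =>
    if h : (Finset.univ.filter (· ∉ a :: s)).Nonempty then
      let l := (Finset.univ.filter (· ∉ a :: s)).min' h
      addLeaf l a (fromPruferCode (s.restrictCompl l))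
    else ⊥ -- unreachable for codes of length `Nat.card V - 2`
termination_by V _ _ s => s.length
decreasing_by exact Nat.lt_succ_of_le (List.length_restrictCompl_le s)

@[simp] lemma fromPruferCode_nil : fromPruferCode ([] : List V) = ⊤ := by
  rw [fromPruferCode]

lemma fromPruferCode_cons {a l : V} {s : List V} (hl : IsLeast {x | x ∉ a :: s} l) :
    fromPruferCode (a :: s) = addLeaf l a (fromPruferCode (s.restrictCompl l)) := by
  have hne : (Finset.univ.filter (· ∉ a :: s)).Nonempty := ⟨l, by simpa using hl.1⟩
  have hmin : (Finset.univ.filter (· ∉ a :: s)).min' hne = l :=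
    (Finset.isLeast_min' _ hne).unique (by simpa using hl)
  rw [fromPruferCode, dif_pos hne, hmin]

theorem isTree_fromPruferCode_and_isLeaf_iff {n : ℕ} (hV : Nat.card V = n + 2) {s : List V}
    (hs : s.length = n) :
    (fromPruferCode s).IsTree ∧ ∀ v, (fromPruferCode s).IsLeaf v ↔ v ∉ s := by
  induction n generalizing V with
  | zero =>
    obtain rfl := List.length_eq_zero_iff.mp hs
    simpa using ⟨isTree_top_of_card_eq_two hV, isLeaf_top_of_card_eq_two hV⟩
  | succ n ih =>
    obtain ⟨a, s, rfl⟩ := List.exists_cons_of_length_eq_add_one hs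
    obtain ⟨l, hl⟩ := List.exists_isLeast_notMem (s := a :: s)
      (by simp only [List.length_cons] at hs ⊢; omega)
    have hl' : l ≠ a ∧ l ∉ s := by simpa using hl.1
    have hcard : Nat.card ({l}ᶜ : Set V) = n + 2 := by rw [Nat.card_compl_singleton]; omega
    obtain ⟨hT, hleaf⟩ := ih hcard (s := s.restrictCompl l)
      (by rw [List.length_restrictCompl hl'.2]; simpa using hs)
    rw [fromPruferCode_cons hl]
    refine ⟨isTree_addLeaf (Ne.symm hl'.1) hT, fun v => ?_⟩
    by_cases hvl : v = l
    · subst hvl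
      exact iff_of_true (isLeaf_addLeaf_left (Ne.symm hl'.1)) hl.1
    by_cases hva : v = a
    · subst hva
      have : Nontrivial ({l}ᶜ : Set V) := Finite.one_lt_card_iff_nontrivial.mp (by omega)
      obtain ⟨w, hw⟩ := hT.preconnected.exists_adj_of_nontrivial ⟨v, Ne.symm hl'.1⟩
      exact iff_of_false (not_isLeaf_addLeaf_right _ hw) (by simp)
    obtain ⟨x, rfl⟩ : ∃ x : ({l}ᶜ : Set V), ↑x = v := ⟨⟨v, hvl⟩, rfl⟩
    rw [isLeaf_addLeaf_iff (Ne.symm hl'.1) hva, hleaf, List.mem_restrictCompl]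
    simp [hva]

theorem fromPruferCode_injOn {n : ℕ} (hV : Nat.card V = n + 2) :
    {s : List V | s.length = n}.InjOn fromPruferCode := by
  induction n generalizing V with
  | zero =>
    intro s hs t ht _
    rw [List.length_eq_zero_iff.mp hs, List.length_eq_zero_iff.mp ht]
  | succ n ih =>
    intro s hs t ht hst
    have hleaves : {x | x ∉ s} = {x | x ∉ t} := Set.ext fun x => show x ∉ s ↔ x ∉ t by
      rw [← (isTree_fromPruferCode_and_isLeaf_iff hV hs).2, hst,
        (isTree_fromPruferCode_and_isLeaf_iff hV ht).2]
    obtain ⟨a, s, rfl⟩ := List.exists_cons_of_length_eq_add_one hs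
    obtain ⟨b, t, rfl⟩ := List.exists_cons_of_length_eq_add_one ht
    simp only [Set.mem_ofPred_eq, List.length_cons, add_left_inj] at hs ht
    obtain ⟨l, hl⟩ := List.exists_isLeast_notMem (s := a :: s)
      (by simp only [List.length_cons]; omega)
    have hls : l ≠ a ∧ l ∉ s := by simpa using hl.1
    have hl_t : IsLeast {x | x ∉ b :: t} l := hleaves ▸ hl
    have hlt : l ≠ b ∧ l ∉ t := by simpa using hl_t.1
    rw [fromPruferCode_cons hl, fromPruferCode_cons hl_t,
      addLeaf_inj (Ne.symm hls.1) (Ne.symm hlt.1)] at hst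
    obtain ⟨rfl, hst⟩ := hst
    have hcard : Nat.card ({l}ᶜ : Set V) = n + 2 := by rw [Nat.card_compl_singleton]; omega
    have := ih hcard (by simpa [List.length_restrictCompl hls.2])
      (by simpa [List.length_restrictCompl hlt.2]) hst
    rw [← List.map_val_restrictCompl hls.2, ← List.map_val_restrictCompl hlt.2, this]

theorem exists_fromPruferCode_eq {n : ℕ} (hV : Nat.card V = n + 2) {T : SimpleGraph V}
    (hT : T.IsTree) : ∃ s : List V, s.length = n ∧ fromPruferCode s = T := by
  induction n generalizing V with
  | zero => exact ⟨[], rfl, by rw [fromPruferCode_nil, hT.connected.eq_top_of_card_eq_two hV]⟩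
  | succ n ih =>
    have : Nontrivial V := Finite.one_lt_card_iff_nontrivial.mp (by omega)
    obtain ⟨l, hl⟩ := (Set.toFinite {v | T.IsLeaf v}).exists_isLeast hT.exists_isLeaf
    obtain ⟨a, hla, ha⟩ := hl.1
    have hcard : Nat.card ({l}ᶜ : Set V) = n + 2 := by rw [Nat.card_compl_singleton]; omega
    obtain ⟨s, hs, hsT⟩ := ih hcard (hT.induce_compl_isLeaf hl.1)
    have hleast : IsLeast {x | x ∉ a :: s.map Subtype.val} l := by
      refine ⟨by simp [hla.ne], fun x hx => ?_⟩
      by_cases hxl : x = l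
      · exact hxl.ge
      have hx' : x ≠ a ∧ x ∉ s.map Subtype.val := by
        simpa only [Set.mem_ofPred_eq, List.mem_cons, not_or] using hx
      refine hl.2 ((isLeaf_induce_iff (x := (⟨x, hxl⟩ : ({l}ᶜ : Set V))) ?_).mp ?_)
      · rintro w hw (rfl : w = l)
        exact hx'.1 (ha x hw.symm)
      · rw [← hsT, (isTree_fromPruferCode_and_isLeaf_iff hcard hs).2]
        exact fun h => hx'.2 (List.mem_map_of_mem h)
    refine ⟨a :: s.map Subtype.val, by simp [hs], ?_⟩
    rw [fromPruferCode_cons hleast, List.restrictCompl_map_val, hsT,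
      addLeaf_induce_eq fun w => ⟨ha w, fun h => h ▸ hla⟩]

end Prufer

theorem card_isTree [Finite V] (hV : 2 ≤ Nat.card V) :
    Nat.card {T : SimpleGraph V // T.IsTree} = Nat.card V ^ (Nat.card V - 2) := by
  have := Fintype.ofFinite V
  let := LinearOrder.lift' _ (Fintype.equivFin V).injective
  obtain ⟨n, hn⟩ : ∃ n, Nat.card V = n + 2 := ⟨_, (Nat.sub_add_cancel hV).symm⟩
  let code (s : List.Vector V n) : {T : SimpleGraph V // T.IsTree} :=
    ⟨fromPruferCode s.1, (isTree_fromPruferCode_and_isLeaf_iff hn s.2).1⟩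
  have hcode : code.Bijective := by
    refine ⟨fun s t h => Subtype.ext ?_, fun T => ?_⟩
    · exact fromPruferCode_injOn hn s.2 t.2 (congrArg Subtype.val h)
    · obtain ⟨s, hs, hsT⟩ := exists_fromPruferCode_eq hn T.2
      exact ⟨⟨s, hs⟩, Subtype.ext hsT⟩
  rw [← Nat.card_eq_of_bijective code hcode, Nat.card_eq_fintype_card, card_vector,
    ← Nat.card_eq_fintype_card, hn, Nat.add_sub_cancel]

end SimpleGraph

/-- Cayley's formula: there are p^(p-2) labeled trees on p ≥ 2 vertices. -/
theorem cayley_formula (p : ℕ) (hp : 2 ≤ p) :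
    Nat.card {G : SimpleGraph (Fin p) // G.IsTree} = p ^ (p - 2) := by
  simpa using SimpleGraph.card_isTree (V := Fin p) (by simpa using hp)
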